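/- Let L_Z and L̃_Z be symmetric positive definite and L_Y symmetric positive semidefinite. If ‖L̃_Z − L_Z‖₂ ≤ ε, then the largest generalized eigenvalues satisfy |λ_max(L_Y, L̃_Z) − λ_max(L_Y, L_Z)| ≤ ε ‖L_Y‖₂ / (λ_min(L_Z) · λ_min(L̃_Z)). -/

import Mathlib

open Matrix

/-- The ℓ₂ operator (spectral) norm of a real matrix. -/
noncomputable def specNorm {m n : ℕ} (A : Matrix (Fin m) (Fin n) ℝ) : ℝ :=
  ‖LinearMap.toContinuousLinearMap (Matrix.toEuclideanLin A)‖

/-- The largest generalized eigenvalue of the pair `(A, B)`, as a supremum of Rayleigh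
quotients. -/
noncomputable def genLamMax {N : ℕ} (A B : Matrix (Fin N) (Fin N) ℝ) : ℝ :=
  sSup {r : ℝ | ∃ v : Fin N → ℝ, v ≠ 0 ∧ r = (v ⬝ᵥ A.mulVec v) / (v ⬝ᵥ B.mulVec v)}

/-!
For each nonzero `v`, the two Rayleigh quotients `vᵀ L_Y v / vᵀ B v` (`B = L_Z, L̃_Z`) differ by
`|vᵀ L_Y v| · |vᵀ (L̃_Z - L_Z) v| / (vᵀ L_Z v · vᵀ L̃_Z v)`. The numerator is at most
`‖L_Y‖ ε |v|⁴` and the denominator at least `λ_min(L_Z) λ_min(L̃_Z) |v|⁴`, because `λ_min(B) • 1 ≤ B`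
in the Loewner order. A uniform bound on the difference of two families passes to their suprema.
-/

theorem abs_div_sub_div_le_of_le {a b₁ b₂ s α δ μ₁ μ₂ : ℝ} (hs : 0 < s) (hμ₁ : 0 < μ₁)
    (hμ₂ : 0 < μ₂) (ha : |a| ≤ α * s) (hb : |b₂ - b₁| ≤ δ * s) (hb₁ : μ₁ * s ≤ b₁)
    (hb₂ : μ₂ * s ≤ b₂) : |a / b₂ - a / b₁| ≤ δ * α / (μ₁ * μ₂) := by
  have hb₁0 : 0 < b₁ := (mul_pos hμ₁ hs).trans_le hb₁
  have hb₂0 : 0 < b₂ := (mul_pos hμ₂ hs).trans_le hb₂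
  calc |a / b₂ - a / b₁| = |a| * |b₂ - b₁| / (b₁ * b₂) := by
        rw [div_sub_div _ _ hb₂0.ne' hb₁0.ne', abs_div, abs_of_pos (mul_pos hb₂0 hb₁0),
          ← abs_mul, abs_sub_comm]
        ring_nf
    _ ≤ (α * s) * (δ * s) / ((μ₁ * s) * (μ₂ * s)) := by
        have hα : 0 ≤ α * s := (abs_nonneg a).trans ha
        have hδ : 0 ≤ δ * s := (abs_nonneg _).trans hb
        exact div_le_div₀ (mul_nonneg hα hδ) (mul_le_mul ha hb (abs_nonneg _) hα)
          (by positivity) (mul_le_mul hb₁ hb₂ (by positivity) hb₁0.le)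
    _ = δ * α / (μ₁ * μ₂) := by field_simp

theorem sSup_le_sSup_add {α : Type*} {p : α → Prop} {f g : α → ℝ} {c : ℝ} (hp : ∃ x, p x)
    (hg : BddAbove {r | ∃ x, p x ∧ r = g x}) (hfg : ∀ x, p x → f x ≤ g x + c) :
    sSup {r | ∃ x, p x ∧ r = f x} ≤ sSup {r | ∃ x, p x ∧ r = g x} + c := by
  obtain ⟨x₀, hx₀⟩ := hp
  refine csSup_le ⟨f x₀, x₀, hx₀, rfl⟩ ?_
  rintro _ ⟨x, hx, rfl⟩
  exact (hfg x hx).trans (add_le_add_left (le_csSup hg ⟨x, hx, rfl⟩) c)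

theorem abs_sSup_sub_sSup_le {α : Type*} {p : α → Prop} {f g : α → ℝ} {c : ℝ} (hp : ∃ x, p x)
    (hf : BddAbove {r | ∃ x, p x ∧ r = f x}) (hg : BddAbove {r | ∃ x, p x ∧ r = g x})
    (hfg : ∀ x, p x → |f x - g x| ≤ c) :
    |sSup {r | ∃ x, p x ∧ r = f x} - sSup {r | ∃ x, p x ∧ r = g x}| ≤ c := by
  rw [abs_sub_le_iff, sub_le_iff_le_add', sub_le_iff_le_add']
  exact ⟨sSup_le_sSup_add hp hg fun x hx => by linarith [abs_le.mp (hfg x hx)],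
    sSup_le_sSup_add hp hf fun x hx => by linarith [abs_le.mp (hfg x hx)]⟩

namespace Matrix

variable {n : Type*} [Fintype n] [DecidableEq n]

open scoped Matrix.Norms.L2Operator

theorem abs_dotProduct_mulVec_le_l2_opNorm (M : Matrix n n ℝ) (v : n → ℝ) :
    |v ⬝ᵥ M *ᵥ v| ≤ ‖M‖ * (v ⬝ᵥ v) := by
  set x := WithLp.toLp 2 v
  have hx : ‖x‖ ^ 2 = v ⬝ᵥ v := by
    rw [← real_inner_self_eq_norm_sq, EuclideanSpace.inner_toLp_toLp]; simp
  calc |v ⬝ᵥ M *ᵥ v| = |inner ℝ x (toEuclideanCLM (𝕜 := ℝ) M x)| := by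
        rw [inner_toEuclideanCLM]
    _ ≤ ‖x‖ * ‖toEuclideanCLM (𝕜 := ℝ) M x‖ := abs_real_inner_le_norm _ _
    _ ≤ ‖x‖ * (‖M‖ * ‖x‖) := by gcongr; exact (toEuclideanCLM (𝕜 := ℝ) M).le_opNorm x
    _ = ‖M‖ * (v ⬝ᵥ v) := by rw [← hx]; ring

open MatrixOrder in
theorem IsHermitian.iInf_eigenvalues_mul_dotProduct_le [Nonempty n] {B : Matrix n n ℝ}
    (hB : B.IsHermitian) (v : n → ℝ) : (⨅ i, hB.eigenvalues i) * (v ⬝ᵥ v) ≤ v ⬝ᵥ B *ᵥ v := by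
  have hle : algebraMap ℝ _ (⨅ i, hB.eigenvalues i) ≤ B := by
    refine algebraMap_le_of_le_spectrum ?_ hB
    rw [hB.spectrum_real_eq_range_eigenvalues]
    rintro _ ⟨i, rfl⟩
    exact ciInf_le (Finite.bddBelow_range _) i
  have hnonneg := (le_iff.mp hle).dotProduct_mulVec_nonneg v
  simpa [sub_mulVec, Algebra.algebraMap_eq_smul_one, smul_mulVec, dotProduct_smul] using hnonneg

theorem PosDef.iInf_eigenvalues_pos [Nonempty n] {B : Matrix n n ℝ} (hB : B.PosDef) :
    0 < ⨅ i, hB.1.eigenvalues i := by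
  obtain ⟨i, hi⟩ := exists_eq_ciInf_of_finite (f := hB.1.eigenvalues)
  exact hi ▸ hB.eigenvalues_pos i

theorem PosDef.abs_div_sub_div_le [Nonempty n] (A : Matrix n n ℝ) {B₁ B₂ : Matrix n n ℝ}
    (hB₁ : B₁.PosDef) (hB₂ : B₂.PosDef) {v : n → ℝ} (hv : v ≠ 0) :
    |(v ⬝ᵥ A *ᵥ v) / (v ⬝ᵥ B₂ *ᵥ v) - (v ⬝ᵥ A *ᵥ v) / (v ⬝ᵥ B₁ *ᵥ v)| ≤
      ‖B₂ - B₁‖ * ‖A‖ / ((⨅ i, hB₁.1.eigenvalues i) * ⨅ i, hB₂.1.eigenvalues i) := by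
  have hs : 0 < v ⬝ᵥ v := by simpa using dotProduct_star_self_pos_iff.mpr hv
  refine abs_div_sub_div_le_of_le hs hB₁.iInf_eigenvalues_pos hB₂.iInf_eigenvalues_pos
    (abs_dotProduct_mulVec_le_l2_opNorm A v) ?_
    (hB₁.1.iInf_eigenvalues_mul_dotProduct_le v) (hB₂.1.iInf_eigenvalues_mul_dotProduct_le v)
  simpa only [sub_mulVec, dotProduct_sub] using abs_dotProduct_mulVec_le_l2_opNorm (B₂ - B₁) v

theorem PosDef.bddAbove_div [Nonempty n] (A : Matrix n n ℝ) {B : Matrix n n ℝ}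
    (hB : B.PosDef) : BddAbove {r | ∃ v : n → ℝ, v ≠ 0 ∧ r = (v ⬝ᵥ A *ᵥ v) / (v ⬝ᵥ B *ᵥ v)} := by
  refine ⟨‖A‖ / ⨅ i, hB.1.eigenvalues i, ?_⟩
  rintro _ ⟨v, hv, rfl⟩
  have hs : 0 < v ⬝ᵥ v := by simpa using dotProduct_star_self_pos_iff.mpr hv
  have hμ := hB.iInf_eigenvalues_pos
  calc (v ⬝ᵥ A *ᵥ v) / (v ⬝ᵥ B *ᵥ v)
      ≤ (‖A‖ * (v ⬝ᵥ v)) / ((⨅ i, hB.1.eigenvalues i) * (v ⬝ᵥ v)) :=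
        div_le_div₀ (by positivity)
          ((le_abs_self _).trans (abs_dotProduct_mulVec_le_l2_opNorm A v))
          (by positivity) (hB.1.iInf_eigenvalues_mul_dotProduct_le v)
    _ = ‖A‖ / ⨅ i, hB.1.eigenvalues i := mul_div_mul_right _ _ hs.ne'

theorem abs_genLamMax_sub_le {N : ℕ} [NeZero N] (A : Matrix (Fin N) (Fin N) ℝ)
    {B₁ B₂ : Matrix (Fin N) (Fin N) ℝ} (hB₁ : B₁.PosDef) (hB₂ : B₂.PosDef) :
    |genLamMax A B₂ - genLamMax A B₁| ≤
      specNorm (B₂ - B₁) * specNorm A /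
        ((⨅ i, hB₁.1.eigenvalues i) * ⨅ i, hB₂.1.eigenvalues i) :=
  abs_sSup_sub_sSup_le ⟨Pi.single 0 1, by simp⟩ (hB₂.bddAbove_div A) (hB₁.bddAbove_div A)
    fun _ hv => hB₁.abs_div_sub_div_le A hB₂ hv

end Matrix

theorem genLamMax_stability_general {N : ℕ} (hN : 0 < N) (ε : ℝ)
    (LY LZ LZt : Matrix (Fin N) (Fin N) ℝ)
    (hZ : LZ.PosDef) (hZt : LZt.PosDef)
    (hpert : specNorm (LZt - LZ) ≤ ε) :
    |genLamMax LY LZt - genLamMax LY LZ| ≤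
      ε * specNorm LY / ((⨅ i, hZ.1.eigenvalues i) * ⨅ i, hZt.1.eigenvalues i) := by
  have : NeZero N := ⟨hN.ne'⟩
  have hμ := mul_pos hZ.iInf_eigenvalues_pos hZt.iInf_eigenvalues_pos
  calc |genLamMax LY LZt - genLamMax LY LZ|
      ≤ specNorm (LZt - LZ) * specNorm LY / _ := abs_genLamMax_sub_le LY hZ hZt
    _ ≤ ε * specNorm LY / _ := by gcongr; exact norm_nonneg _

/-- Stability of the largest generalized eigenvalue under perturbation of
the positive definite matrix. -/
theorem genLamMax_stability {N : ℕ} (hN : 0 < N) (ε : ℝ)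
    (LY LZ LZt : Matrix (Fin N) (Fin N) ℝ)
    (hY : LY.PosSemidef) (hZ : LZ.PosDef) (hZt : LZt.PosDef)
    (hpert : specNorm (LZt - LZ) ≤ ε) :
    |genLamMax LY LZt - genLamMax LY LZ| ≤
      ε * specNorm LY / ((⨅ i, hZ.1.eigenvalues i) * ⨅ i, hZt.1.eigenvalues i) :=
  genLamMax_stability_general hN ε LY LZ LZt hZ hZt hpert
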